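/- In y_ℏ(gl(n)), with A = T^{(2)}_{n,n} − ((n−1)/2)ℏ·T^{(1)}_{n,n} + ℏ∑_{u=1}^{n−1} T^{(1)}_{n,u}T^{(1)}_{u,n} + (ℏ/2)(T^{(1)}_{n,n})², one has [A, T^{(1)}_{n−1,n}] = −(T^{(2)}_{n−1,n} − ((n−2)/2)ℏ·T^{(1)}_{n−1,n} + ℏ∑_{u=1}^{n−1} T^{(1)}_{n−1,u}T^{(1)}_{u,n}), and the right-hand side in parentheses equals (1/2)[ℋ_{n−1}, T^{(1)}_{n−1,n}]. -/

import Mathlib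

open scoped BigOperators

noncomputable section

/-- Kronecker delta as a complex scalar. -/
def kd {n : ℕ} (i j : Fin n) : ℂ := if i = j then 1 else 0

/-- The free associative unital `ℂ`-algebra on generators `T^{(r)}_{i,j}`,
`r ∈ ℕ`, `1 ≤ i, j ≤ n` (indices realized as `Fin n`). -/
abbrev FAgl (n : ℕ) := FreeAlgebra ℂ (ℕ × Fin n × Fin n)

/-- The generator `T^{(r)}_{i,j}` of the free algebra. -/
def Tf (n : ℕ) (r : ℕ) (i j : Fin n) : FAgl n := FreeAlgebra.ι ℂ (r, i, j)

/-- The defining relations of `y_ℏ(gl(n))`:  `T^{(0)}_{i,j} = δ_{i,j}`;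
`[T^{(1)}_{i,j}, T^{(r)}_{k,l}] = δ_{j,k}T^{(r)}_{i,l} − δ_{i,l}T^{(r)}_{k,j}`;
`[T^{(2)}_{i,i}, T^{(2)}_{j,j}] = −ℏ(T^{(1)}_{j,i}T^{(2)}_{i,j} − T^{(2)}_{j,i}T^{(1)}_{i,j})`;
`[T^{(2)}_{i,i}, T^{(r)}_{k,l}] = δ_{i,k}T^{(r+1)}_{i,l} − δ_{i,l}T^{(r+1)}_{k,i}
  − ℏ(T^{(1)}_{k,i}T^{(r)}_{i,l} − T^{(r)}_{k,i}T^{(1)}_{i,l})`. -/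
inductive glRel (n : ℕ) (ℏ : ℂ) : FAgl n → FAgl n → Prop
  | T0 (i j : Fin n) :
      glRel n ℏ (Tf n 0 i j) (algebraMap ℂ (FAgl n) (kd i j))
  | R1 (r : ℕ) (i j k l : Fin n) :
      glRel n ℏ ⁅Tf n 1 i j, Tf n r k l⁆
        (kd j k • Tf n r i l - kd i l • Tf n r k j)
  | R2 (i j : Fin n) :
      glRel n ℏ ⁅Tf n 2 i i, Tf n 2 j j⁆
        (-(ℏ • (Tf n 1 j i * Tf n 2 i j - Tf n 2 j i * Tf n 1 i j)))
  | R3 (r : ℕ) (i k l : Fin n) :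
      glRel n ℏ ⁅Tf n 2 i i, Tf n r k l⁆
        (kd i k • Tf n (r + 1) i l - kd i l • Tf n (r + 1) k i
          - ℏ • (Tf n 1 k i * Tf n r i l - Tf n r k i * Tf n 1 i l))

/-- The algebra `y_ℏ(gl(n))`: the quotient of the free algebra by the two-sided ideal
generated by the differences of the two sides of the relations `glRel`. -/
abbrev yGL (n : ℕ) (ℏ : ℂ) := RingQuot (glRel n ℏ)

/-- The image of `T^{(r)}_{i,j}` in `y_ℏ(gl(n))`. -/
def T (n : ℕ) (ℏ : ℂ) (r : ℕ) (i j : Fin n) : yGL n ℏ :=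
  RingQuot.mkAlgHom ℂ (glRel n ℏ) (Tf n r i j)

/-- The element `ℋ_i` of `y_ℏ(gl(n))` for `1 ≤ i ≤ n−1`; here the paper's index `i`
corresponds to the 0-based index `a = i − 1` (so `a + 1 < n`), and
`ℋ_i = T^{(2)}_{i,i} − T^{(2)}_{i+1,i+1} − ((i−1)/2)ℏ(T^{(1)}_{i,i} − T^{(1)}_{i+1,i+1})
 + ℏ∑_{u=1}^{i−1} T^{(1)}_{i,u}T^{(1)}_{u,i} − ℏ∑_{u=1}^{i} T^{(1)}_{i+1,u}T^{(1)}_{u,i+1}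
 + (ℏ/2)((T^{(1)}_{i,i})² − (T^{(1)}_{i+1,i+1})²)`. -/
def HH (n : ℕ) (ℏ : ℂ) (a : ℕ) (h : a + 1 < n) : yGL n ℏ :=
  T n ℏ 2 ⟨a, by omega⟩ ⟨a, by omega⟩ - T n ℏ 2 ⟨a + 1, h⟩ ⟨a + 1, h⟩
    - (((a : ℂ) / 2) * ℏ) • (T n ℏ 1 ⟨a, by omega⟩ ⟨a, by omega⟩ - T n ℏ 1 ⟨a + 1, h⟩ ⟨a + 1, h⟩)
    + ℏ • (∑ u : Fin a,
        T n ℏ 1 ⟨a, by omega⟩ ⟨u.val, by have := u.isLt; omega⟩ *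
          T n ℏ 1 ⟨u.val, by have := u.isLt; omega⟩ ⟨a, by omega⟩)
    - ℏ • (∑ u : Fin (a + 1),
        T n ℏ 1 ⟨a + 1, h⟩ ⟨u.val, by have := u.isLt; omega⟩ *
          T n ℏ 1 ⟨u.val, by have := u.isLt; omega⟩ ⟨a + 1, h⟩)
    + (ℏ / 2) • ((T n ℏ 1 ⟨a, by omega⟩ ⟨a, by omega⟩) ^ 2
        - (T n ℏ 1 ⟨a + 1, h⟩ ⟨a + 1, h⟩) ^ 2)


/-- The element `A = T^{(2)}_{n,n} − ((n−1)/2)ℏ·T^{(1)}_{n,n}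
 + ℏ∑_{u=1}^{n−1} T^{(1)}_{n,u}T^{(1)}_{u,n} + (ℏ/2)(T^{(1)}_{n,n})²` of `y_ℏ(gl(n))`. -/
def Agl (n : ℕ) (ℏ : ℂ) (hn : 3 ≤ n) : yGL n ℏ :=
  T n ℏ 2 ⟨n - 1, by omega⟩ ⟨n - 1, by omega⟩
    - ((((n : ℂ) - 1) / 2) * ℏ) • T n ℏ 1 ⟨n - 1, by omega⟩ ⟨n - 1, by omega⟩
    + ℏ • (∑ u : Fin (n - 1),
        T n ℏ 1 ⟨n - 1, by omega⟩ ⟨u.val, by have := u.isLt; omega⟩ *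
          T n ℏ 1 ⟨u.val, by have := u.isLt; omega⟩ ⟨n - 1, by omega⟩)
    + (ℏ / 2) • (T n ℏ 1 ⟨n - 1, by omega⟩ ⟨n - 1, by omega⟩) ^ 2

/-- The element `B = T^{(2)}_{n−1,n} − ((n−2)/2)ℏ·T^{(1)}_{n−1,n}
 + ℏ∑_{u=1}^{n−1} T^{(1)}_{n−1,u}T^{(1)}_{u,n}` of `y_ℏ(gl(n))`. -/
def Bgl (n : ℕ) (ℏ : ℂ) (hn : 3 ≤ n) : yGL n ℏ :=
  T n ℏ 2 ⟨n - 2, by omega⟩ ⟨n - 1, by omega⟩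
    - ((((n : ℂ) - 2) / 2) * ℏ) • T n ℏ 1 ⟨n - 2, by omega⟩ ⟨n - 1, by omega⟩
    + ℏ • (∑ u : Fin (n - 1),
        T n ℏ 1 ⟨n - 2, by omega⟩ ⟨u.val, by have := u.isLt; omega⟩ *
          T n ℏ 1 ⟨u.val, by have := u.isLt; omega⟩ ⟨n - 1, by omega⟩)

section aux
variable {n : ℕ} {ℏ : ℂ}

lemma kd_self (i : Fin n) : kd i i = 1 := by simp [kd]
lemma kd_ne {i j : Fin n} (h : i ≠ j) : kd i j = 0 := by simp [kd, h]

lemma comm1 (r : ℕ) (i j k l : Fin n) :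
    ⁅T n ℏ 1 i j, T n ℏ r k l⁆ = kd j k • T n ℏ r i l - kd i l • T n ℏ r k j := by
  have h := RingQuot.mkAlgHom_rel ℂ (glRel.R1 (n := n) (ℏ := ℏ) r i j k l)
  simpa [T, Ring.lie_def, map_sub, map_mul, map_smul] using h

lemma comm3 (r : ℕ) (i k l : Fin n) :
    ⁅T n ℏ 2 i i, T n ℏ r k l⁆ = kd i k • T n ℏ (r+1) i l - kd i l • T n ℏ (r+1) k i
      - ℏ • (T n ℏ 1 k i * T n ℏ r i l - T n ℏ r k i * T n ℏ 1 i l) := by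
  have h := RingQuot.mkAlgHom_rel ℂ (glRel.R3 (n := n) (ℏ := ℏ) r i k l)
  simpa [T, Ring.lie_def, map_sub, map_mul, map_smul] using h

lemma mul_lie' {n : ℕ} {ℏ : ℂ} (x y z : yGL n ℏ) : ⁅x*y,z⁆ = x*⁅y,z⁆ + ⁅x,z⁆*y := by
  simp only [Ring.lie_def, mul_sub, sub_mul, mul_assoc]; abel

lemma sq_lie' {n : ℕ} {ℏ : ℂ} (x z : yGL n ℏ) : ⁅x^2,z⁆ = x*⁅x,z⁆ + ⁅x,z⁆*x := by
  rw [pow_two]; exact mul_lie' x x z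

lemma smul_lie'' {n : ℕ} {ℏ : ℂ} (c : ℂ) (x z : yGL n ℏ) :
    ⁅c • x, z⁆ = c • ⁅x, z⁆ := by
  simp [Ring.lie_def, smul_mul_assoc, mul_smul_comm, smul_sub]

lemma sum_lie' {n : ℕ} {ℏ : ℂ} {ι : Type} (s : Finset ι) (f : ι → yGL n ℏ) (z : yGL n ℏ) :
    ⁅∑ i ∈ s, f i, z⁆ = ∑ i ∈ s, ⁅f i, z⁆ := by
  simp only [Ring.lie_def, Finset.sum_mul, Finset.mul_sum, Finset.sum_sub_distrib]

lemma add_lie' {n : ℕ} {ℏ : ℂ} (x y z : yGL n ℏ) : ⁅x + y, z⁆ = ⁅x, z⁆ + ⁅y, z⁆ := by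
  simp only [Ring.lie_def, add_mul, mul_add]; abel

lemma sub_lie' {n : ℕ} {ℏ : ℂ} (x y z : yGL n ℏ) : ⁅x - y, z⁆ = ⁅x, z⁆ - ⁅y, z⁆ := by
  simp only [Ring.lie_def, sub_mul, mul_sub]; abel

lemma sum_fin_cast {M : Type*} [AddCommMonoid M] {m m' : ℕ} (h : m = m') (g : ℕ → M) :
    ∑ u : Fin m, g u.val = ∑ u : Fin m', g u.val := by subst h; rfl

end aux

set_option maxHeartbeats 1000000 in
/-- in `y_ℏ(gl(n))`, `[A, T^{(1)}_{n−1,n}] = −B`, and moreover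
`B = (1/2)[ℋ_{n−1}, T^{(1)}_{n−1,n}]`. -/
theorem Agl_comm_T (n : ℕ) (hn : 3 ≤ n) (ℏ : ℂ) :
    ⁅Agl n ℏ hn, T n ℏ 1 ⟨n - 2, by omega⟩ ⟨n - 1, by omega⟩⁆ = -(Bgl n ℏ hn) ∧
    Bgl n ℏ hn = ((1 : ℂ) / 2) •
      ⁅HH n ℏ (n - 2) (by omega), T n ℏ 1 ⟨n - 2, by omega⟩ ⟨n - 1, by omega⟩⁆ := by
  have hn2 : n - 2 < n := by omega
  have hn1 : n - 1 < n := by omega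
  set a : Fin n := ⟨n-2, hn2⟩ with ha
  set b : Fin n := ⟨n-1, hn1⟩ with hb
  set t : yGL n ℏ := T n ℏ 1 a b with ht
  have hab : a ≠ b := by simp [ha, hb, Fin.ext_iff]; omega
  have hba : b ≠ a := hab.symm
  set e : Fin (n-1) → Fin n := fun u => ⟨u.val, by omega⟩ with he
  set f : Fin (n-2) → Fin n := fun u => ⟨u.val, by omega⟩ with hf
  -- atomic brackets
  have h2bb : ⁅T n ℏ 2 b b, t⁆ = -(T n ℏ 2 a b) := by
    rw [ht, comm3]
    simp [kd_self, kd_ne hba]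
  have h2aa : ⁅T n ℏ 2 a a, t⁆ = T n ℏ 2 a b := by
    rw [ht, comm3]
    simp [kd_self, kd_ne hab]
  have h1bb : ⁅T n ℏ 1 b b, t⁆ = -t := by
    rw [ht, comm1]
    simp [kd_self, kd_ne hba]
  have h1aa : ⁅T n ℏ 1 a a, t⁆ = t := by
    rw [ht, comm1]
    simp [kd_self, kd_ne hab]
  -- sum brackets
  have hSb : ⁅∑ u : Fin (n-1), T n ℏ 1 b (e u) * T n ℏ 1 (e u) b, t⁆
      = T n ℏ 1 b b * t - ∑ u : Fin (n-1), T n ℏ 1 a (e u) * T n ℏ 1 (e u) b := by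
    rw [sum_lie']
    have hterm : ∀ u : Fin (n-1), ⁅T n ℏ 1 b (e u) * T n ℏ 1 (e u) b, t⁆
        = kd (e u) a • (T n ℏ 1 b b * T n ℏ 1 (e u) b)
          - T n ℏ 1 a (e u) * T n ℏ 1 (e u) b := by
      intro u
      have hub : (e u) ≠ b := by
        simp only [he, hb, ne_eq, Fin.ext_iff]; have := u.isLt; omega
      rw [ht, mul_lie', comm1, comm1]
      simp [kd_self, kd_ne hub, kd_ne hba, sub_mul, smul_mul_assoc]
    rw [Finset.sum_congr rfl (fun u _ => hterm u), Finset.sum_sub_distrib]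
    congr 1
    have hpick : ∀ u : Fin (n-1), kd (e u) a • (T n ℏ 1 b b * T n ℏ 1 (e u) b)
        = if u = (⟨n-2, by omega⟩ : Fin (n-1)) then T n ℏ 1 b b * t else 0 := by
      intro u
      by_cases h : u = (⟨n-2, by omega⟩ : Fin (n-1))
      · subst h
        rw [if_pos rfl]
        have : e (⟨n-2, by omega⟩ : Fin (n-1)) = a := by simp [he, ha, Fin.ext_iff]
        rw [this, kd_self, one_smul, ht]
      · rw [if_neg h]
        have : e u ≠ a := by
          simp only [he, ha, ne_eq, Fin.ext_iff]
          simpa [Fin.ext_iff] using h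
        rw [kd_ne this, zero_smul]
    rw [Finset.sum_congr rfl (fun u _ => hpick u), Finset.sum_ite_eq' Finset.univ,
      if_pos (Finset.mem_univ _)]
  have hSf : ⁅∑ u : Fin (n-2), T n ℏ 1 a (f u) * T n ℏ 1 (f u) a, t⁆
      = ∑ u : Fin (n-2), T n ℏ 1 a (f u) * T n ℏ 1 (f u) b := by
    rw [sum_lie']
    refine Finset.sum_congr rfl (fun u _ => ?_)
    have hua : (f u) ≠ a := by
      simp only [hf, ha, ne_eq, Fin.ext_iff]; have := u.isLt; omega
    have hub : (f u) ≠ b := by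
      simp only [hf, hb, ne_eq, Fin.ext_iff]; have := u.isLt; omega
    rw [ht, mul_lie', comm1, comm1]
    simp [kd_self, kd_ne hua, kd_ne hub, kd_ne hab]
  set g : ℕ → yGL n ℏ := fun k =>
    if hk : k < n then T n ℏ 1 a ⟨k, hk⟩ * T n ℏ 1 ⟨k, hk⟩ b else 0 with hg
  have e1 : ∑ u : Fin (n-1), T n ℏ 1 a (e u) * T n ℏ 1 (e u) b
      = ∑ u : Fin (n-1), g u.val := by
    refine Finset.sum_congr rfl (fun u _ => ?_)
    simp only [hg]; rw [dif_pos (by omega : u.val < n)]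
  have e2 : ∑ u : Fin (n-2), T n ℏ 1 a (f u) * T n ℏ 1 (f u) b
      = ∑ u : Fin (n-2), g u.val := by
    refine Finset.sum_congr rfl (fun u _ => ?_)
    simp only [hg]; rw [dif_pos (by omega : u.val < n)]
  have hsplit : ∑ u : Fin (n-1), T n ℏ 1 a (e u) * T n ℏ 1 (e u) b
      = (∑ u : Fin (n-2), T n ℏ 1 a (f u) * T n ℏ 1 (f u) b) + T n ℏ 1 a a * t := by
    rw [e1, e2, sum_fin_cast (show n-1 = (n-2)+1 by omega) g, Fin.sum_univ_castSucc]
    have e3 : ∑ u : Fin (n-2), g ((Fin.castSucc u) : Fin ((n-2)+1)).val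
        = ∑ u : Fin (n-2), g u.val :=
      Finset.sum_congr rfl (fun u _ => by rw [Fin.coe_castSucc])
    rw [e3]
    congr 1
    show g (n-2) = _
    simp only [hg]; rw [dif_pos hn2]
  -- normal forms of Agl, Bgl, HH
  have hA : Agl n ℏ hn = T n ℏ 2 b b - (((n:ℂ)-1)/2*ℏ) • T n ℏ 1 b b
      + ℏ • (∑ u : Fin (n-1), T n ℏ 1 b (e u) * T n ℏ 1 (e u) b)
      + (ℏ/2) • (T n ℏ 1 b b)^2 := rfl
  have hB : Bgl n ℏ hn = T n ℏ 2 a b - (((n:ℂ)-2)/2*ℏ) • t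
      + ℏ • (∑ u : Fin (n-1), T n ℏ 1 a (e u) * T n ℏ 1 (e u) b) := rfl
  have hb2 : (⟨n-2+1, by omega⟩ : Fin n) = b := by
    exact Fin.ext (show n-2+1 = n-1 by omega)
  set g2 : ℕ → yGL n ℏ := fun k =>
    if hk : k < n then T n ℏ 1 b ⟨k, hk⟩ * T n ℏ 1 ⟨k, hk⟩ b else 0 with hg2
  have e4 : (∑ u : Fin ((n-2)+1),
        T n ℏ 1 b ⟨u.val, by have := u.isLt; omega⟩ *
          T n ℏ 1 ⟨u.val, by have := u.isLt; omega⟩ b)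
      = ∑ u : Fin (n-1), T n ℏ 1 b (e u) * T n ℏ 1 (e u) b := by
    have l1 : (∑ u : Fin ((n-2)+1),
          T n ℏ 1 b ⟨u.val, by have := u.isLt; omega⟩ *
            T n ℏ 1 ⟨u.val, by have := u.isLt; omega⟩ b)
        = ∑ u : Fin ((n-2)+1), g2 u.val := by
      refine Finset.sum_congr rfl (fun u _ => ?_)
      simp only [hg2]; rw [dif_pos (by have := u.isLt; omega : u.val < n)]
    have l2 : (∑ u : Fin (n-1), T n ℏ 1 b (e u) * T n ℏ 1 (e u) b)
        = ∑ u : Fin (n-1), g2 u.val := by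
      refine Finset.sum_congr rfl (fun u _ => ?_)
      simp only [hg2]; rw [dif_pos (by omega : u.val < n)]
    rw [l1, l2, sum_fin_cast (show (n-2)+1 = n-1 by omega) g2]
  have hHH : HH n ℏ (n-2) (by omega) = T n ℏ 2 a a - T n ℏ 2 b b
      - (((n-2:ℕ):ℂ)/2*ℏ) • (T n ℏ 1 a a - T n ℏ 1 b b)
      + ℏ • (∑ u : Fin (n-2), T n ℏ 1 a (f u) * T n ℏ 1 (f u) a)
      - ℏ • (∑ u : Fin (n-1), T n ℏ 1 b (e u) * T n ℏ 1 (e u) b)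
      + (ℏ/2) • ((T n ℏ 1 a a)^2 - (T n ℏ 1 b b)^2) := by
    simp only [HH]
    simp only [hb2]
    exact congrArg₂ (· + ·)
      (congrArg₂ (· - ·) rfl (congrArg (ℏ • ·) e4)) rfl
  have hcomm_bb : t * T n ℏ 1 b b = T n ℏ 1 b b * t + t := by
    have h := h1bb; rw [Ring.lie_def] at h
    have h2 : t * T n ℏ 1 b b
        = T n ℏ 1 b b * t - (T n ℏ 1 b b * t - t * T n ℏ 1 b b) := by abel
    rw [h2, h]; try abel
  have hcomm_aa : t * T n ℏ 1 a a = T n ℏ 1 a a * t - t := by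
    have h := h1aa; rw [Ring.lie_def] at h
    have h2 : t * T n ℏ 1 a a
        = T n ℏ 1 a a * t - (T n ℏ 1 a a * t - t * T n ℏ 1 a a) := by abel
    rw [h2, h]; try abel
  have hc2 : ((n-2:ℕ):ℂ) = (n:ℂ) - 2 := by
    push_cast [Nat.cast_sub (show 2 ≤ n by omega)]; ring
  constructor
  · show ⁅Agl n ℏ hn, t⁆ = -(Bgl n ℏ hn)
    rw [hA, hB]
    simp only [add_lie', sub_lie', smul_lie'', sq_lie']
    rw [h2bb, h1bb, hSb]
    have hneg : T n ℏ 1 b b * -t + -t * T n ℏ 1 b b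
        = -(T n ℏ 1 b b * t) + -(t * T n ℏ 1 b b) :=
      by rw [show T n ℏ 1 b b * -t = -(T n ℏ 1 b b * t) by exact mul_neg (T n ℏ 1 b b) t,
             show -t * T n ℏ 1 b b = -(t * T n ℏ 1 b b) by exact neg_mul t (T n ℏ 1 b b)]
    rw [hneg, hcomm_bb]
    module
  · show Bgl n ℏ hn = ((1:ℂ)/2) • ⁅HH n ℏ (n-2) (by omega), t⁆
    rw [hHH, hB]
    simp only [add_lie', sub_lie', smul_lie'', sq_lie']
    rw [h2aa, h2bb, h1aa, h1bb, hSb, hSf, hsplit, hc2]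
    have hneg : T n ℏ 1 b b * -t + -t * T n ℏ 1 b b
        = -(T n ℏ 1 b b * t) + -(t * T n ℏ 1 b b) :=
      by rw [show T n ℏ 1 b b * -t = -(T n ℏ 1 b b * t) by exact mul_neg (T n ℏ 1 b b) t,
             show -t * T n ℏ 1 b b = -(t * T n ℏ 1 b b) by exact neg_mul t (T n ℏ 1 b b)]
    rw [hneg, hcomm_bb, hcomm_aa]
    module

end
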